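/- For any k ≥ 3 and primes p₁ > p₂ > ... > p_k ≥ 2 such that consecutive p_i, p_{i+1} satisfy p_i/p_{i+1} ≤ 5/3, the PMCS beamsplitter count satisfies d_N^{PMCS} < (4/3 + p_k)·N where N = p₁·p₂···p_k. -/
import Mathlib

open Finset

private lemma pmcs_prod_pos (r : ℕ → ℝ) (hr : ∀ i, 2 ≤ r i) (n : ℕ) :
    0 < ∏ i ∈ Finset.range n, r i :=
  Finset.prod_pos fun i _ => lt_of_lt_of_le (by norm_num) (hr i)

private lemma pmcs_sum_le (r : ℕ → ℝ) (hr : ∀ i, 2 ≤ r i) (n : ℕ) :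
    ∑ j ∈ Finset.range n, ∏ i ∈ Finset.range (j + 1), r i
      ≤ ∏ i ∈ Finset.range (n + 1), r i := by
  induction n with
  | zero => simpa using le_of_lt (pmcs_prod_pos r hr 1)
  | succ n ih =>
    rw [Finset.sum_range_succ, Finset.prod_range_succ (n := n + 1)]
    have h1 : 0 < ∏ i ∈ Finset.range (n + 1), r i := pmcs_prod_pos r hr (n + 1)
    nlinarith [hr (n + 1)]

private lemma pmcs_shift (r : ℕ → ℝ) (n : ℕ) :
    ∑ j ∈ Finset.range n, ∏ i ∈ Finset.range (j + 2), r i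
      = ∑ j ∈ Finset.range n, ∏ i ∈ Finset.range (j + 1), r i
        + ∏ i ∈ Finset.range (n + 1), r i - ∏ i ∈ Finset.range 1, r i := by
  induction n with
  | zero => simp
  | succ n ih =>
    rw [Finset.sum_range_succ, Finset.sum_range_succ, ih]
    ring

private lemma pmcs_main (k : ℕ) (hk : 3 ≤ k) (r : ℕ → ℝ) (hr : ∀ i, 2 ≤ r i)
    (hratio : ∀ i, i + 1 < k → r i ≤ 5 / 3 * r (i + 1)) :
    ∑ j ∈ Finset.range k, (∏ i ∈ Finset.range j, r i) * (r j * (r j - 1))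
      < (4 / 3 + r (k - 1)) * ∏ i ∈ Finset.range k, r i := by
  set P : ℕ → ℝ := fun n => ∏ i ∈ Finset.range n, r i with hP
  have hPpos : ∀ n, 0 < P n := pmcs_prod_pos r hr
  have hPsucc : ∀ n, P (n + 1) = P n * r n := fun n => Finset.prod_range_succ r n
  -- Rewrite each summand
  have hsummand : ∀ j, (∏ i ∈ Finset.range j, r i) * (r j * (r j - 1))
      = P (j + 1) * (r j - 1) := by
    intro j; rw [hPsucc]; ring
  rw [Finset.sum_congr rfl fun j _ => hsummand j]
  -- split off the last term
  obtain ⟨m, hm⟩ : ∃ m, k = m + 1 := ⟨k - 1, by omega⟩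
  have hm1 : k - 1 = m := by omega
  subst hm
  rw [Finset.sum_range_succ, hm1]
  have hlast : P (m + 1) = P m * r m := hPsucc m
  -- key bound on the partial sum
  have hkey : ∑ j ∈ Finset.range m, P (j + 1) * (r j - 1) < 7 / 3 * P (m + 1) := by
    have hterm : ∀ j ∈ Finset.range m, P (j + 1) * (r j - 1)
        ≤ 5 / 3 * P (j + 2) - P (j + 1) := by
      intro j hj
      rw [Finset.mem_range] at hj
      have hrat := hratio j (by omega)
      have h1 : P (j + 2) = P (j + 1) * r (j + 1) := hPsucc (j + 1)
      nlinarith [hPpos (j + 1)]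
    calc ∑ j ∈ Finset.range m, P (j + 1) * (r j - 1)
        ≤ ∑ j ∈ Finset.range m, (5 / 3 * P (j + 2) - P (j + 1)) :=
          Finset.sum_le_sum hterm
      _ = 5 / 3 * (∑ j ∈ Finset.range m, P (j + 2))
            - ∑ j ∈ Finset.range m, P (j + 1) := by
          rw [Finset.sum_sub_distrib, Finset.mul_sum]
      _ = 5 / 3 * (∑ j ∈ Finset.range m, P (j + 1) + P (m + 1) - P 1)
            - ∑ j ∈ Finset.range m, P (j + 1) := by
          rw [pmcs_shift r m]
      _ = 5 / 3 * P (m + 1) + 2 / 3 * (∑ j ∈ Finset.range m, P (j + 1))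
            - 5 / 3 * P 1 := by ring
      _ < 7 / 3 * P (m + 1) := by
          have hA : ∑ j ∈ Finset.range m, P (j + 1) ≤ P (m + 1) :=
            pmcs_sum_le r hr m
          have h1 := hPpos 1
          linarith
  nlinarith [hPpos (m + 1)]

theorem pmcs_count_bound (k : ℕ) (hk : 3 ≤ k) (p : Fin k → ℕ)
    (hprime : ∀ i, (p i).Prime)
    (hdec : ∀ i j : Fin k, i < j → p j < p i)
    (hratio : ∀ (i : ℕ) (h : i + 1 < k),
      (p ⟨i, lt_trans (Nat.lt_succ_self i) h⟩ : ℝ) ≤ 5 / 3 * (p ⟨i + 1, h⟩ : ℝ)) :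
    ((2 * ∑ j : Fin k, (∏ i ∈ Finset.Iio j, p i) * Nat.choose (p j) 2 : ℕ) : ℝ) <
      (4 / 3 + (p ⟨k - 1, by omega⟩ : ℝ)) * ((∏ i : Fin k, p i : ℕ) : ℝ) := by
  set q : ℕ → ℕ := fun i => if h : i < k then p ⟨i, h⟩ else 2 with hq
  have hqval : ∀ (i : ℕ) (h : i < k), q i = p ⟨i, h⟩ := by
    intro i h; simp [hq, h]
  have hq2 : ∀ i, 2 ≤ q i := by
    intro i
    by_cases h : i < k
    · rw [hqval i h]; exact (hprime ⟨i, h⟩).two_le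
    · simp [hq, h]
  -- convert the Fin-indexed sum to a range-indexed sum
  have hprodIio : ∀ j : Fin k, (∏ i ∈ Finset.Iio j, p i)
      = ∏ i ∈ Finset.range (j : ℕ), q i := by
    intro j
    rw [← Nat.Iio_eq_range, ← Fin.map_valEmbedding_Iio, Finset.prod_map]
    exact Finset.prod_congr rfl fun i _ => ((hqval i.val i.isLt).trans (by simp)).symm
  have hsum : (∑ j : Fin k, (∏ i ∈ Finset.Iio j, p i) * Nat.choose (p j) 2)
      = ∑ j ∈ Finset.range k, (∏ i ∈ Finset.range j, q i) * Nat.choose (q j) 2 := by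
    rw [← Fin.sum_univ_eq_sum_range
      (fun j => (∏ i ∈ Finset.range j, q i) * Nat.choose (q j) 2) k]
    refine Finset.sum_congr rfl fun j _ => ?_
    rw [hprodIio j, hqval j.val j.isLt]
  have hprodall : (∏ i : Fin k, p i) = ∏ i ∈ Finset.range k, q i := by
    rw [← Fin.prod_univ_eq_prod_range (fun i => q i) k]
    exact Finset.prod_congr rfl fun i _ => (hqval i.val i.isLt).symm
  have hlast : (p ⟨k - 1, by omega⟩ : ℕ) = q (k - 1) := (hqval (k - 1) (by omega)).symm
  rw [hsum, hprodall, hlast]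
  -- cast to ℝ
  push_cast [Nat.cast_choose_two]
  have hgoal : (2 : ℝ) * ∑ j ∈ Finset.range k,
        (∏ i ∈ Finset.range j, (q i : ℝ)) * ((q j : ℝ) * ((q j : ℝ) - 1) / 2)
      = ∑ j ∈ Finset.range k,
        (∏ i ∈ Finset.range j, (q i : ℝ)) * ((q j : ℝ) * ((q j : ℝ) - 1)) := by
    rw [Finset.mul_sum]
    exact Finset.sum_congr rfl fun j _ => by ring
  rw [hgoal]
  apply pmcs_main k hk (fun i => (q i : ℝ))
  · intro i
    exact_mod_cast hq2 i
  · intro i h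
    have := hratio i h
    rw [hqval i (by omega), hqval (i + 1) h]
    exact this
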